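/- Let F = ∪_{i=1}^k S_{d_i} be a star forest with k ≥ 2 and d_1 ≥ ⋯ ≥ d_k ≥ 1. If G is an F-free graph of order n, then the set C = {v ∈ V(G) : d(v) ≥ Σ_{i=1}^k d_i + k - 1} has at most k-1 elements. -/

import Mathlib

/-! Choose `k` vertices `c₁, …, c_k` of degree at least `∑ dᵢ + k - 1` and give them disjoint
leaf sets greedily: when `cᵢ` is treated, the other centres and the leaves already chosen
forbid at most `k - 1 + ∑_{j < i} dⱼ` of its neighbours, so `dᵢ` neighbours remain available. -/

open SimpleGraph

attribute [local instance] Classical.propDecidable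

/-- The star forest `⋃ i, S_(d i)`; in component `i` the vertex `0` is the center. -/
def starForest (k : ℕ) (d : Fin k → ℕ) : SimpleGraph (Σ i : Fin k, Fin (d i + 1)) where
  Adj x y := x.1 = y.1 ∧ x ≠ y ∧ ((x.2 : ℕ) = 0 ∨ (y.2 : ℕ) = 0)
  symm := ⟨by rintro x y ⟨h1, h2, h3⟩; exact ⟨h1.symm, h2.symm, h3.symm⟩⟩
  loopless := ⟨by rintro x ⟨_, h, _⟩; exact h rfl⟩

/-- `G` contains a copy of `F` as a subgraph. -/
def Contains {V W : Type*} (G : SimpleGraph V) (F : SimpleGraph W) : Prop :=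
  ∃ f : W ↪ V, ∀ ⦃a b⦄, F.Adj a b → G.Adj (f a) (f b)


open Finset

namespace SimpleGraph

variable {V : Type*} {G : SimpleGraph V}

/-- The `+ 1` accounts for `v ∈ F`, which is not a neighbour of `v`. -/
theorem exists_subset_neighborFinset_disjoint [DecidableEq V] [G.LocallyFinite] {v : V}
    {F : Finset V} (hv : v ∈ F) {m : ℕ} (h : m + #F ≤ G.degree v + 1) :
    ∃ T ⊆ G.neighborFinset v, #T = m ∧ Disjoint T F := by
  have hsdiff : G.neighborFinset v \ F = G.neighborFinset v \ F.erase v := by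
    ext w
    by_cases hw : w = v <;> simp [hw]
  have hcard : m ≤ #(G.neighborFinset v \ F) := by
    have := le_card_sdiff (F.erase v) (G.neighborFinset v)
    rw [← hsdiff, card_neighborFinset_eq_degree, card_erase_of_mem hv] at this
    have := card_pos.2 ⟨v, hv⟩
    omega
  obtain ⟨T, hT, rfl⟩ := exists_subset_card_eq hcard
  exact ⟨T, hT.trans sdiff_subset, rfl, disjoint_of_subset_left hT sdiff_disjoint⟩

theorem exists_disjoint_neighborFinset_subsets [DecidableEq V] [G.LocallyFinite] {ι : Type*} [DecidableEq ι]
    (C : Finset V) (c : ι → V) (d : ι → ℕ) (s : Finset ι) (hcC : ∀ i ∈ s, c i ∈ C)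
    (hdeg : ∀ i ∈ s, ∑ j ∈ s, d j + #C ≤ G.degree (c i) + 1) :
    ∃ S : ι → Finset V, ∀ i ∈ s, S i ⊆ G.neighborFinset (c i) ∧ #(S i) = d i ∧
      Disjoint (S i) C ∧ ∀ j ∈ s, j ≠ i → Disjoint (S i) (S j) := by
  induction s using Finset.induction_on with
  | empty => exact ⟨fun _ => ∅, by simp⟩
  | insert a s ha ih =>
    rw [forall_mem_insert] at hcC
    simp only [sum_insert ha, forall_mem_insert] at hdeg
    obtain ⟨S, hS⟩ := ih hcC.2 fun i hi => le_trans (by omega) (hdeg.2 i hi)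
    obtain ⟨T, hTN, hTcard, hTF⟩ := exists_subset_neighborFinset_disjoint (G := G)
      (mem_union_left (s.biUnion S) hcC.1) (m := d a) (by
        have := card_union_le C (s.biUnion S)
        have : #(s.biUnion S) ≤ ∑ j ∈ s, d j :=
          card_biUnion_le.trans_eq (sum_congr rfl fun i hi => (hS i hi).2.1)
        omega)
    rw [disjoint_union_right] at hTF
    have hTS : ∀ j ∈ s, Disjoint T (S j) := fun j hj =>
      disjoint_of_subset_right (subset_biUnion_of_mem S hj) hTF.2
    refine ⟨Function.update S a T, ?_⟩
    rw [forall_mem_insert]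
    refine ⟨?_, fun i hi => ?_⟩
    · rw [Function.update_self]
      refine ⟨hTN, hTcard, hTF.1, fun j hj hja => ?_⟩
      rw [Function.update_of_ne hja]
      exact hTS j ((mem_insert.1 hj).resolve_left hja)
    · have hia : i ≠ a := ne_of_mem_of_not_mem hi ha
      obtain ⟨hSN, hScard, hSC, hSS⟩ := hS i hi
      rw [Function.update_of_ne hia]
      refine ⟨hSN, hScard, hSC, ?_⟩
      rw [forall_mem_insert, Function.update_self]
      exact ⟨fun _ => (hTS i hi).symm, fun j hj hji => by
        rw [Function.update_of_ne (ne_of_mem_of_not_mem hj ha)]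
        exact hSS j hj hji⟩

theorem contains_starForest {k : ℕ} {d : Fin k → ℕ} (f : ∀ i, Fin (d i + 1) → V)
    (hinj : ∀ i, Function.Injective (f i))
    (hdisj : Pairwise fun i j => Disjoint (Set.range (f i)) (Set.range (f j)))
    (hadj : ∀ i (j : Fin (d i)), G.Adj (f i 0) (f i j.succ)) :
    Contains G (starForest k d) := by
  refine ⟨⟨fun x => f x.1 x.2, ?_⟩, ?_⟩
  · rintro ⟨i, a⟩ ⟨j, b⟩ h
    obtain rfl : i = j := by
      by_contra hij
      exact Set.disjoint_left.1 (hdisj hij) ⟨a, rfl⟩ ⟨b, h.symm⟩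
    exact congrArg _ (hinj i h)
  · rintro ⟨i, a⟩ ⟨_, b⟩ ⟨rfl, hne, hcenter⟩
    have hab : a ≠ b := fun h => hne (h ▸ rfl)
    have hstar : ∀ a b : Fin (d i + 1), (a : ℕ) = 0 → a ≠ b → G.Adj (f i a) (f i b) := by
      intro a b ha hab
      obtain rfl : a = 0 := Fin.ext ha
      obtain ⟨b, rfl⟩ := Fin.exists_succ_eq.2 hab.symm
      exact hadj i b
    rcases hcenter with ha | hb
    · exact hstar a b ha hab
    · exact (hstar b a hb hab.symm).symm

theorem contains_starForest_of_le_degree [DecidableEq V] [G.LocallyFinite] {k : ℕ}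
    (d : Fin k → ℕ) (c : Fin k → V) (hc : Function.Injective c)
    (hdeg : ∀ i, ∑ j, d j + k - 1 ≤ G.degree (c i)) :
    Contains G (starForest k d) := by
  set C := univ.image c
  have hC : #C = k := by rw [card_image_of_injective _ hc, card_fin]
  have hcC : ∀ i, c i ∈ C := fun i => mem_image_of_mem c (mem_univ i)
  obtain ⟨S, hS⟩ := exists_disjoint_neighborFinset_subsets (G := G) C c d univ (fun i _ => hcC i) fun i _ => by
    have := hdeg i
    rw [hC]
    omega
  let leaf i (j : Fin (d i)) : V := ((S i).equivFinOfCardEq (hS i (mem_univ i)).2.1).symm j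
  have hleaf : ∀ i j, leaf i j ∈ S i := fun i j => Subtype.prop _
  have hrange : ∀ i, Set.range (Fin.cons (c i) (leaf i) : Fin (d i + 1) → V) ⊆
      ↑(insert (c i) (S i)) := by
    intro i
    rw [Fin.range_cons, coe_insert]
    exact Set.insert_subset_insert (Set.range_subset_iff.2 (hleaf i))
  refine contains_starForest (fun i => Fin.cons (c i) (leaf i)) (fun i => ?_) ?_ ?_
  · refine Fin.cons_injective_of_injective ?_ (Subtype.val_injective.comp (Equiv.injective _))
    rintro ⟨j, hj⟩
    exact Finset.disjoint_left.1 (hS i (mem_univ i)).2.2.1 (hleaf i j) (hj ▸ hcC i)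
  · intro i j hij
    refine Set.disjoint_of_subset (hrange i) (hrange j) ?_
    obtain ⟨-, -, hSiC, hSS⟩ := hS i (mem_univ i)
    obtain ⟨-, -, hSjC, -⟩ := hS j (mem_univ j)
    rw [disjoint_coe, disjoint_insert_left, disjoint_insert_right, mem_insert, not_or]
    exact ⟨⟨hc.ne hij, Finset.disjoint_right.1 hSjC (hcC i)⟩,
      Finset.disjoint_right.1 hSiC (hcC j), hSS j (mem_univ j) hij.symm⟩
  · intro i j
    simp only [Fin.cons_zero, Fin.cons_succ]
    exact (mem_neighborFinset G _ _).1 ((hS i (mem_univ i)).1 (hleaf i j))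

end SimpleGraph

theorem stmt6_general (k n : ℕ) (d : Fin k → ℕ)
    (G : SimpleGraph (Fin n)) (hfree : ¬ Contains G (starForest k d)) :
    (Finset.univ.filter fun v => ∑ i, d i + k - 1 ≤ G.degree v).card ≤ k - 1 := by
  by_contra! hbig
  obtain ⟨t, ht, htk⟩ := exists_subset_card_eq (Nat.le_of_pred_lt hbig)
  let e := (t.equivFinOfCardEq htk).symm
  exact hfree (contains_starForest_of_le_degree d (fun i => e i)
    (Subtype.val_injective.comp e.injective) fun i => (mem_filter.1 (ht (e i).2)).2)

theorem stmt6 (k n : ℕ) (hk : 2 ≤ k) (d : Fin k → ℕ)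
    (hmono : ∀ i j : Fin k, i ≤ j → d j ≤ d i) (hd : ∀ i, 1 ≤ d i)
    (G : SimpleGraph (Fin n)) (hfree : ¬ Contains G (starForest k d)) :
    (Finset.univ.filter fun v => ∑ i, d i + k - 1 ≤ G.degree v).card ≤ k - 1 :=
  stmt6_general k n d G hfree
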